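/- Let p be a prime and I, J ⊆ ℕ. The pair (I, J) is an admissible index-pair (i.e. R(I,J) is a subgroup of R(F_p)) if and only if all of the following hold: (1) for every j ∈ J and every n ∈ {1, …, j+1} such that the binomial coefficient C(j+1, n) is not divisible by p, one has {j + n·j' : j' ∈ J} ⊆ J; (2) I is closed under addition; (3) for every i ∈ I and every n ∈ {1, …, i} such that C(i, n) is not divisible by p, one has {i + n·j : j ∈ J} ⊆ I. -/

import Mathlib

/-!
Over a finite commutative ring, a subset of the Riordan group that is closed under
multiplication is closed under inversion: truncations below a fixed degree take finitely many
values, so by pigeonhole `u⁻¹` agrees with some power `u ^ t` up to that degree.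

Since `(h₁, g₁) (h₂, g₂) = (h₁ · h₂ ∘ g₁, g₂ ∘ g₁)`, closure under multiplication reduces to:
right composition with `g₁ ∈ N(J)` preserves the exponent sets `{0} ∪ I` and `{1} ∪ (J + 1)`.
Up to any given degree, `g₁` is a finite composite of elementary substitutions `x + β x^(j+1)`
with `j ∈ J`, and `(x + β x^(j+1))^d = ∑ C(d, n) βⁿ x^(d + n j)`; conditions (1) and (3) say
precisely that the exponents with nonzero coefficient stay in these sets.

Conversely, `C(j + 1, n)`, `1` and `C(i, n)` are the coefficients in degrees `j + n j' + 1`,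
`i + i'` and `i + n j` of products of the elements `(1, x + x^(j+1))` and `(1 + x^i, x)`; these lie
in the Riordan group because every `g = x + ⋯` has a compositional inverse.
-/

open PowerSeries Finset

namespace RiordanPaper

variable {K : Type*} [CommRing K]

noncomputable def comp (f g : PowerSeries K) : PowerSeries K :=
  PowerSeries.mk fun n => ∑ d ∈ Finset.range (n + 1), coeff d f * coeff n (g ^ d)

lemma coeff_comp (f g : PowerSeries K) (n : ℕ) :
    coeff n (comp f g) = ∑ d ∈ Finset.range (n + 1), coeff d f * coeff n (g ^ d) := by
  simp [comp]

lemma coeff_pow_eq_zero {g : PowerSeries K} (hg : constantCoeff g = 0) {n d : ℕ}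
    (h : n < d) : coeff n (g ^ d) = 0 := by
  have hdvd : (X : PowerSeries K) ^ d ∣ g ^ d :=
    pow_dvd_pow_of_dvd (PowerSeries.X_dvd_iff.2 hg) d
  exact (PowerSeries.X_pow_dvd_iff.1 hdvd) n h

lemma coeff_comp_of_lt {g : PowerSeries K} (hg : constantCoeff g = 0)
    (f : PowerSeries K) {n N : ℕ} (hn : n < N) :
    coeff n (comp f g) = ∑ d ∈ Finset.range N, coeff d f * coeff n (g ^ d) := by
  rw [coeff_comp]
  apply Finset.sum_subset
  · intro d hd
    simp only [Finset.mem_range] at hd ⊢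
    omega
  · intro d _ hd'
    simp only [Finset.mem_range] at hd'
    rw [coeff_pow_eq_zero hg (by omega), mul_zero]

lemma coeff_eval₂ {g : PowerSeries K} (hg : constantCoeff g = 0)
    (P : Polynomial K) (n : ℕ) :
    coeff n (Polynomial.eval₂ (C (R := K)) g P)
      = ∑ d ∈ Finset.range (n + 1), P.coeff d * coeff n (g ^ d) := by
  classical
  have h1 : P.natDegree < max (n + 1) (P.natDegree + 1) :=
    lt_of_lt_of_le (Nat.lt_succ_self _) (le_max_right _ _)
  rw [Polynomial.eval₂_eq_sum_range' (C (R := K)) h1 g, map_sum]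
  have h2 : ∀ d ∈ Finset.range (max (n + 1) (P.natDegree + 1)),
      coeff n (C (R := K) (P.coeff d) * g ^ d) = P.coeff d * coeff n (g ^ d) := fun d _ => by
    rw [coeff_C_mul]
  rw [Finset.sum_congr rfl h2]
  symm
  apply Finset.sum_subset
  · intro d hd
    simp only [Finset.mem_range] at hd ⊢
    omega
  · intro d _ hd'
    simp only [Finset.mem_range] at hd'
    rw [coeff_pow_eq_zero hg (by omega), mul_zero]

lemma coeff_comp_eq_eval₂_trunc {g : PowerSeries K} (hg : constantCoeff g = 0)
    (f : PowerSeries K) {n N : ℕ} (hn : n < N) :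
    coeff n (comp f g) = coeff n (Polynomial.eval₂ (C (R := K)) g (trunc N f)) := by
  rw [coeff_eval₂ hg, coeff_comp]
  apply Finset.sum_congr rfl
  intro d hd
  simp only [Finset.mem_range] at hd
  rw [PowerSeries.coeff_trunc, if_pos (by omega)]

lemma mul_comp {g : PowerSeries K} (hg : constantCoeff g = 0) (f₁ f₂ : PowerSeries K) :
    comp (f₁ * f₂) g = comp f₁ g * comp f₂ g := by
  ext n
  have key : coeff n (comp (f₁ * f₂) g)
      = coeff n (Polynomial.eval₂ (C (R := K)) g (trunc (n + 1) f₁ * trunc (n + 1) f₂)) := by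
    rw [coeff_eval₂ hg, coeff_comp]
    apply Finset.sum_congr rfl
    intro d hd
    simp only [Finset.mem_range] at hd
    congr 1
    rw [Polynomial.coeff_mul, PowerSeries.coeff_mul]
    apply Finset.sum_congr rfl
    intro ab hab
    rw [Finset.HasAntidiagonal.mem_antidiagonal] at hab
    rw [PowerSeries.coeff_trunc, PowerSeries.coeff_trunc, if_pos (by omega), if_pos (by omega)]
  rw [key, Polynomial.eval₂_mul, PowerSeries.coeff_mul, PowerSeries.coeff_mul]
  apply Finset.sum_congr rfl
  intro ab hab
  rw [Finset.HasAntidiagonal.mem_antidiagonal] at hab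
  rw [← coeff_comp_eq_eval₂_trunc hg f₁ (show ab.1 < n + 1 by omega),
    ← coeff_comp_eq_eval₂_trunc hg f₂ (show ab.2 < n + 1 by omega)]

lemma one_comp (g : PowerSeries K) : comp (1 : PowerSeries K) g = 1 := by
  ext n
  rw [coeff_comp, Finset.sum_eq_single 0]
  · simp
  · intro d _ hd0
    simp [PowerSeries.coeff_one, hd0]
  · intro h
    simp at h

lemma comp_X (f : PowerSeries K) : comp f X = f := by
  ext n
  rw [coeff_comp, Finset.sum_eq_single n]
  · rw [coeff_X_pow, if_pos rfl, mul_one]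
  · intro d _ hdn
    rw [coeff_X_pow, if_neg (fun h => hdn h.symm), mul_zero]
  · intro h
    simp at h

lemma X_comp {g : PowerSeries K} (hg : constantCoeff g = 0) : comp X g = g := by
  ext n
  rcases Nat.eq_zero_or_pos n with hn | hn
  · subst hn
    rw [coeff_comp]
    simp [PowerSeries.coeff_X, coeff_zero_eq_constantCoeff_apply, hg]
  · rw [coeff_comp, Finset.sum_eq_single 1]
    · rw [coeff_one_X, pow_one, one_mul]
    · intro d _ hd1
      rw [PowerSeries.coeff_X, if_neg hd1, zero_mul]
    · intro h
      simp only [Finset.mem_range] at h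
      omega

lemma constantCoeff_comp (f g : PowerSeries K) :
    constantCoeff (comp f g) = constantCoeff f := by
  rw [← coeff_zero_eq_constantCoeff_apply, coeff_comp]
  simp

lemma coeff_one_comp (f g : PowerSeries K) :
    coeff 1 (comp f g) = coeff 1 f * coeff 1 g := by
  rw [coeff_comp]
  have : Finset.range 2 = {0, 1} := rfl
  rw [this, Finset.sum_insert (by simp), Finset.sum_singleton, pow_zero, pow_one]
  simp [PowerSeries.coeff_one]

lemma comp_assoc {g k : PowerSeries K} (hg : constantCoeff g = 0)
    (hk : constantCoeff k = 0) (f : PowerSeries K) :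
    comp (comp f g) k = comp f (comp g k) := by
  have hpow : ∀ e : ℕ, (comp g k) ^ e = comp (g ^ e) k := by
    intro e
    induction e with
    | zero => simp [one_comp]
    | succ m ih => rw [pow_succ, pow_succ, ih, mul_comp hk]
  ext n
  rw [coeff_comp, coeff_comp]
  have L1 : ∀ d ∈ Finset.range (n + 1), coeff d (comp f g) * coeff n (k ^ d)
      = ∑ e ∈ Finset.range (n + 1), coeff e f * coeff d (g ^ e) * coeff n (k ^ d) := by
    intro d hd
    simp only [Finset.mem_range] at hd
    rw [coeff_comp_of_lt hg f hd, Finset.sum_mul]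
  rw [Finset.sum_congr rfl L1, Finset.sum_comm]
  apply Finset.sum_congr rfl
  intro e _
  rw [hpow e, coeff_comp, Finset.mul_sum]
  apply Finset.sum_congr rfl
  intro d _
  ring

/-- An element of the Riordan group: a pair `(h, g)` with
`h = 1 + a₁x + ⋯` and `g = x + b₂x² + ⋯`. -/
@[ext]
structure RiordanElem (K : Type*) [CommRing K] where
  h : PowerSeries K
  g : PowerSeries K
  h_zero : constantCoeff h = 1
  g_zero : constantCoeff g = 0
  g_one : coeff 1 g = 1

namespace RiordanElem

noncomputable instance : Mul (RiordanElem K) :=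
  ⟨fun a b => ⟨a.h * comp b.h a.g, comp b.g a.g,
    by rw [map_mul, a.h_zero, one_mul, constantCoeff_comp, b.h_zero],
    by rw [constantCoeff_comp, b.g_zero],
    by rw [coeff_one_comp, b.g_one, a.g_one, one_mul]⟩⟩

noncomputable instance : One (RiordanElem K) :=
  ⟨⟨1, X, map_one _, constantCoeff_X, coeff_one_X⟩⟩

@[simp] lemma mul_h (a b : RiordanElem K) : (a * b).h = a.h * comp b.h a.g := rfl
@[simp] lemma mul_g (a b : RiordanElem K) : (a * b).g = comp b.g a.g := rfl
@[simp] lemma one_h : (1 : RiordanElem K).h = 1 := rfl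
@[simp] lemma one_g : (1 : RiordanElem K).g = X := rfl

noncomputable instance instMonoid : Monoid (RiordanElem K) where
  mul_assoc a b c := by
    ext1
    · show (a.h * comp b.h a.g) * comp c.h (comp b.g a.g)
        = a.h * comp (b.h * comp c.h b.g) a.g
      rw [mul_comp a.g_zero, ← comp_assoc b.g_zero a.g_zero, mul_assoc]
    · show comp c.g (comp b.g a.g) = comp (comp c.g b.g) a.g
      rw [comp_assoc b.g_zero a.g_zero]
  one_mul a := by
    ext1
    · show (1 : PowerSeries K) * comp a.h X = a.h
      rw [comp_X, one_mul]
    · show comp a.g X = a.g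
      exact comp_X a.g
  mul_one a := by
    ext1
    · show a.h * comp 1 a.g = a.h
      rw [one_comp, mul_one]
    · show comp X a.g = a.g
      exact X_comp a.g_zero

end RiordanElem

/-- The Riordan group over `K`, realized as the units of the Riordan monoid. -/
noncomputable abbrev RiordanGroup (K : Type*) [CommRing K] := (RiordanElem K)ˣ

/-- An element of the Nottingham group: `g = x + b₂x² + ⋯`. -/
@[ext]
structure NottinghamElem (K : Type*) [CommRing K] where
  g : PowerSeries K
  g_zero : constantCoeff g = 0
  g_one : coeff 1 g = 1

namespace NottinghamElem

noncomputable instance : Mul (NottinghamElem K) :=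
  ⟨fun a b => ⟨comp b.g a.g,
    by rw [constantCoeff_comp, b.g_zero],
    by rw [coeff_one_comp, b.g_one, a.g_one, one_mul]⟩⟩

noncomputable instance : One (NottinghamElem K) :=
  ⟨⟨X, constantCoeff_X, coeff_one_X⟩⟩

@[simp] lemma mul_g (a b : NottinghamElem K) : (a * b).g = comp b.g a.g := rfl
@[simp] lemma one_g : (1 : NottinghamElem K).g = X := rfl

noncomputable instance instMonoid : Monoid (NottinghamElem K) where
  mul_assoc a b c := by
    ext1
    show comp c.g (comp b.g a.g) = comp (comp c.g b.g) a.g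
    rw [comp_assoc b.g_zero a.g_zero]
  one_mul a := by
    ext1
    show comp a.g X = a.g
    exact comp_X a.g
  mul_one a := by
    ext1
    show comp X a.g = a.g
    exact X_comp a.g_zero

end NottinghamElem

/-- The Nottingham group over `K`, realized as the units of the Nottingham monoid. -/
noncomputable abbrev NottinghamGroup (K : Type*) [CommRing K] := (NottinghamElem K)ˣ


/-- The subset `R(I,J) = H(I) ⋊ N(J)` of the Riordan group over `F_p`:
pairs `(h, g)` with `h = 1 + ∑_{i ∈ I} aᵢ xⁱ` and `g = x + ∑_{j ∈ J} bⱼ x^{j+1}`. -/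
def RIJ (p : ℕ) (I J : Set ℕ) : Set (RiordanGroup (ZMod p)) :=
  {u | (∀ i, 0 < i → i ∉ I → coeff i ((u : RiordanElem (ZMod p)).h) = 0) ∧
       (∀ j, 0 < j → j ∉ J → coeff (j + 1) ((u : RiordanElem (ZMod p)).g) = 0)}

/-- `(I, J)` is an admissible index-pair: `R(I,J)` is a subgroup of `R(F_p)`. -/
def IsAdmissible (p : ℕ) (I J : Set ℕ) : Prop :=
  ∃ S : Subgroup (RiordanGroup (ZMod p)), (S : Set (RiordanGroup (ZMod p))) = RIJ p I J

open scoped Pointwise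

def SupportedIn (A : Set ℕ) (f : K⟦X⟧) : Prop := ∀ n ∉ A, coeff n f = 0

lemma SupportedIn.mono {A B : Set ℕ} {f : K⟦X⟧} (hf : SupportedIn A f) (hAB : A ⊆ B) :
    SupportedIn B f :=
  fun n hn => hf n (fun hA => hn (hAB hA))

lemma supportedIn_X_pow {A : Set ℕ} {a : ℕ} (ha : a ∈ A) : SupportedIn A (X ^ a : K⟦X⟧) :=
  fun n hn => by rw [coeff_X_pow, if_neg (ne_of_mem_of_not_mem ha hn).symm]

lemma SupportedIn.mul {A B : Set ℕ} {f g : K⟦X⟧} (hf : SupportedIn A f)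
    (hg : SupportedIn B g) : SupportedIn (A + B) (f * g) := by
  intro n hn
  rw [coeff_mul]
  refine sum_eq_zero fun ⟨a, b⟩ hab => ?_
  by_cases ha : a ∈ A
  · by_cases hb : b ∈ B
    · exact absurd (Set.add_mem_add ha hb) (by rwa [(mem_antidiagonal.mp hab)])
    · rw [hg b hb, mul_zero]
  · rw [hf a ha, zero_mul]

lemma trunc_eq_trunc_iff {N : ℕ} {f g : K⟦X⟧} :
    trunc N f = trunc N g ↔ ∀ k < N, coeff k f = coeff k g := by
  simp only [Polynomial.ext_iff, coeff_trunc]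
  refine ⟨fun h k hk => by simpa [hk] using h k, fun h k => ?_⟩
  split_ifs with hk
  exacts [h k hk, rfl]

lemma coeff_eq_of_trunc_eq {N k : ℕ} {f g : K⟦X⟧} (h : trunc N f = trunc N g) (hk : k < N) :
    coeff k f = coeff k g :=
  trunc_eq_trunc_iff.mp h k hk

lemma trunc_comp_congr {N : ℕ} {f f' g g' : K⟦X⟧} (hf : trunc N f = trunc N f')
    (hg : trunc N g = trunc N g') : trunc N (comp f g) = trunc N (comp f' g') := by
  refine trunc_eq_trunc_iff.mpr fun k hk => ?_
  simp only [coeff_comp]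
  refine sum_congr rfl fun d hd => ?_
  have hpow : trunc N (g ^ d) = trunc N (g' ^ d) := by
    rw [← trunc_trunc_pow, hg, trunc_trunc_pow]
  rw [coeff_eq_of_trunc_eq hf (by rw [mem_range] at hd; omega), coeff_eq_of_trunc_eq hpow hk]

lemma add_comp (f₁ f₂ g : K⟦X⟧) : comp (f₁ + f₂) g = comp f₁ g + comp f₂ g := by
  ext n
  simp only [coeff_comp, map_add, add_mul, sum_add_distrib]

lemma X_pow_comp {g : K⟦X⟧} (hg : constantCoeff g = 0) (d : ℕ) : comp (X ^ d) g = g ^ d := by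
  ext n
  rw [coeff_comp, sum_eq_single d]
  · rw [coeff_X_pow_self, one_mul]
  · intro e _ he
    rw [coeff_X_pow, if_neg he, zero_mul]
  · intro hd
    rw [coeff_pow_eq_zero hg (by simpa using hd), mul_zero]

lemma coeff_pow_self {g : K⟦X⟧} (hg : constantCoeff g = 0) (n : ℕ) :
    coeff n (g ^ n) = coeff 1 g ^ n := by
  obtain ⟨q, rfl⟩ := X_dvd_iff.mpr hg
  rw [mul_pow, coeff_X_pow_mul', if_pos le_rfl, Nat.sub_self, coeff_zero_eq_constantCoeff,
    map_pow, ← zero_add 1, coeff_succ_X_mul, coeff_zero_eq_constantCoeff_apply]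

noncomputable def elementary (β : K) (j : ℕ) : K⟦X⟧ := X + C β * X ^ (j + 1)

lemma constantCoeff_elementary (β : K) (j : ℕ) : constantCoeff (elementary β j) = 0 := by
  simp [elementary]

lemma elementary_zero (j : ℕ) : elementary (0 : K) j = X := by
  simp [elementary]

lemma coeff_elementary (β : K) (j m : ℕ) :
    coeff m (elementary β j) = (if m = 1 then 1 else 0) + if m = j + 1 then β else 0 := by
  simp [elementary, coeff_X]

lemma elementary_pow (β : K) (j d : ℕ) :
    elementary β j ^ d =
      ∑ n ∈ range (d + 1), C ((d.choose n : K) * β ^ n) * X ^ (d + n * j) := by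
  rw [show elementary β j = X * (C β * X ^ j + 1) by rw [elementary]; ring, mul_pow, add_pow,
    mul_sum]
  refine sum_congr rfl fun n _ => ?_
  rw [one_pow, mul_one, mul_pow, ← map_pow, ← pow_mul, map_mul, map_natCast, pow_add]
  ring

lemma coeff_elementary_pow (β : K) (j d m : ℕ) :
    coeff m (elementary β j ^ d) =
      ∑ n ∈ range (d + 1), if m = d + n * j then (d.choose n : K) * β ^ n else 0 := by
  simp only [elementary_pow, map_sum, coeff_C_mul_X_pow]

lemma coeff_elementary_pow_add_mul {j : ℕ} (hj : 0 < j) (β : K) (d n : ℕ) :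
    coeff (d + n * j) (elementary β j ^ d) = (d.choose n : K) * β ^ n := by
  simp only [coeff_elementary_pow, Nat.add_left_cancel_iff, mul_eq_mul_right_iff, hj.ne', or_false,
    sum_ite_eq, mem_range]
  split_ifs with hn
  · rfl
  · rw [Nat.choose_eq_zero_of_lt (by omega), Nat.cast_zero, zero_mul]

lemma coeff_comp_elementary (f : K⟦X⟧) (β : K) (j m : ℕ) :
    coeff m (comp f (elementary β j)) = ∑ d ∈ range (m + 1), ∑ n ∈ range (d + 1),
      if m = d + n * j then coeff d f * ((d.choose n : K) * β ^ n) else 0 := by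
  simp only [coeff_comp, coeff_elementary_pow, mul_sum, mul_ite, mul_zero]

lemma coeff_comp_elementary_of_lt {M m : ℕ} (hm : m < M + 2) (f : K⟦X⟧) (δ : K) :
    coeff m (comp f (elementary δ M)) = coeff m f + if m = M + 1 then coeff 1 f * δ else 0 := by
  have key : ∀ d, coeff m (elementary δ M ^ d) =
      coeff m (X ^ d : K⟦X⟧) + if d = 1 ∧ m = M + 1 then δ else 0 := by
    intro d
    rcases eq_or_ne d 1 with rfl | hd
    · simp [coeff_elementary, coeff_X, add_comm M]
    · rw [coeff_elementary_pow, sum_range_succ', sum_eq_zero]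
      · simp [coeff_X_pow, hd]
      · intro n hn
        have : M ≤ (n + 1) * M := Nat.le_mul_of_pos_left M n.succ_pos
        rw [mem_range] at hn
        rw [if_neg (by omega)]
  rw [coeff_comp]
  simp_rw [key, mul_add, sum_add_distrib, ← coeff_comp, comp_X]
  split_ifs with hm' <;> simp [hm']

variable (K) in
def IsSubstStable (A : Set ℕ) (j : ℕ) : Prop :=
  ∀ d ∈ A, ∀ n, 1 ≤ n → n ≤ d → (d.choose n : K) ≠ 0 → d + n * j ∈ A

lemma SupportedIn.comp_elementary {A : Set ℕ} {f : K⟦X⟧} (hf : SupportedIn A f) {j : ℕ}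
    (hA : IsSubstStable K A j) (β : K) : SupportedIn A (comp f (elementary β j)) := by
  intro m hm
  rw [coeff_comp_elementary]
  refine sum_eq_zero fun d _ => sum_eq_zero fun n hn => ?_
  split_ifs with hmd
  · by_cases hd : d ∈ A
    · rcases Nat.eq_zero_or_pos n with rfl | hn0
      · exact absurd (by simpa [hmd] using hd) hm
      · by_cases hc : (d.choose n : K) = 0
        · rw [hc, zero_mul, mul_zero]
        · exact absurd (hmd ▸ hA d hd n hn0 (by rw [mem_range] at hn; omega) hc) hm
    · rw [hf d hd, zero_mul]
  · rfl

inductive IsElementaryProduct (J : Set ℕ) : K⟦X⟧ → Prop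
  | base : IsElementaryProduct J X
  | comp_elementary {c : K⟦X⟧} (hc : IsElementaryProduct J c) {j : ℕ} (hj : j ∈ J)
      (β : K) : IsElementaryProduct J (comp c (elementary β j))

namespace IsElementaryProduct

variable {J : Set ℕ} {c : K⟦X⟧}

lemma constantCoeff_eq_zero (hc : IsElementaryProduct J c) : constantCoeff c = 0 := by
  induction hc with
  | base => exact constantCoeff_X
  | comp_elementary _ _ _ ih => rwa [constantCoeff_comp]

lemma supportedIn (hJ : ∀ j ∈ J, IsSubstStable K (insert 1 ((· + 1) '' J)) j)
    (hc : IsElementaryProduct J c) : SupportedIn (insert 1 ((· + 1) '' J)) c := by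
  induction hc with
  | base => simpa using supportedIn_X_pow (K := K) (Set.mem_insert 1 ((· + 1) '' J))
  | comp_elementary _ hj β ih => exact ih.comp_elementary (hJ _ hj) β

lemma supportedIn_comp {A : Set ℕ} (hA : ∀ j ∈ J, IsSubstStable K A j) {f : K⟦X⟧}
    (hf : SupportedIn A f) (hc : IsElementaryProduct J c) : SupportedIn A (comp f c) := by
  induction hc with
  | base => rwa [comp_X]
  | comp_elementary hc hj β ih =>
    rw [← comp_assoc hc.constantCoeff_eq_zero (constantCoeff_elementary β _)]
    exact ih.comp_elementary (hA _ hj) β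

end IsElementaryProduct

lemma exists_isElementaryProduct_trunc_eq {J : Set ℕ}
    (hJ : ∀ j ∈ J, IsSubstStable K (insert 1 ((· + 1) '' J)) j) {a : K⟦X⟧}
    (ha0 : constantCoeff a = 0) (ha1 : coeff 1 a = 1)
    (ha : SupportedIn (insert 1 ((· + 1) '' J)) a) (N : ℕ) :
    ∃ c, IsElementaryProduct J c ∧ trunc (N + 2) c = trunc (N + 2) a := by
  induction N with
  | zero =>
    refine ⟨X, .base, trunc_eq_trunc_iff.mpr fun k hk => ?_⟩
    interval_cases k
    · simp [ha0]
    · simp [ha1]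
  | succ N ih =>
    obtain ⟨c, hc, hca⟩ := ih
    set δ := coeff (N + 2) a - coeff (N + 2) c with hδ
    refine ⟨comp c (elementary δ (N + 1)), ?_, trunc_eq_trunc_iff.mpr fun k hk => ?_⟩
    · by_cases hN : N + 1 ∈ J
      · exact hc.comp_elementary hN δ
      · have hN' : N + 2 ∉ insert 1 ((· + 1) '' J) := by simpa using hN
        rw [hδ, ha _ hN', hc.supportedIn hJ _ hN', sub_zero, elementary_zero, comp_X]
        exact hc
    · rw [coeff_comp_elementary_of_lt hk]
      rcases (Nat.lt_succ_iff_lt_or_eq.mp hk) with hk | rfl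
      · rw [if_neg hk.ne, add_zero]
        exact coeff_eq_of_trunc_eq hca hk
      · rw [if_pos rfl, coeff_eq_of_trunc_eq (k := 1) hca (by omega), ha1, one_mul, hδ]
        ring

lemma SupportedIn.comp {A J : Set ℕ} {f a : K⟦X⟧} (hf : SupportedIn A f)
    (hA : ∀ j ∈ J, IsSubstStable K A j)
    (hJ : ∀ j ∈ J, IsSubstStable K (insert 1 ((· + 1) '' J)) j)
    (ha0 : constantCoeff a = 0) (ha1 : coeff 1 a = 1)
    (ha : SupportedIn (insert 1 ((· + 1) '' J)) a) : SupportedIn A (comp f a) := by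
  intro m hm
  obtain ⟨c, hc, hca⟩ := exists_isElementaryProduct_trunc_eq hJ ha0 ha1 ha m
  rw [← coeff_eq_of_trunc_eq (trunc_comp_congr rfl hca) (by omega)]
  exact hc.supportedIn_comp hA hf m hm

-- Conditions (1)–(3), with `p ∤ C(d, n)` read as `(C(d, n) : K) ≠ 0`.
variable (K) in
structure AdmissibleConditions (I J : Set ℕ) : Prop where
  stable_J : ∀ j ∈ J, ∀ n, 1 ≤ n → n ≤ j + 1 → ((j + 1).choose n : K) ≠ 0 →
    ∀ j' ∈ J, j + n * j' ∈ J
  add_mem_I : ∀ i ∈ I, ∀ i' ∈ I, i + i' ∈ I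
  stable_I : ∀ i ∈ I, ∀ n, 1 ≤ n → n ≤ i → (i.choose n : K) ≠ 0 →
    ∀ j ∈ J, i + n * j ∈ I

namespace AdmissibleConditions

variable {I J : Set ℕ}

lemma isSubstStable_insert_one (hIJ : AdmissibleConditions K I J) {j : ℕ} (hj : j ∈ J) :
    IsSubstStable K (insert 1 ((· + 1) '' J)) j := by
  rintro d (rfl | ⟨j₀, hj₀, rfl⟩) n hn1 hnd hc
  · obtain rfl : n = 1 := by omega
    exact Set.mem_insert_of_mem _ ⟨j, hj, by ring⟩
  · refine Set.mem_insert_of_mem _ ⟨j₀ + n * j, hIJ.stable_J j₀ hj₀ n hn1 hnd hc j hj, ?_⟩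
    ring

lemma isSubstStable_insert_zero (hIJ : AdmissibleConditions K I J) {j : ℕ} (hj : j ∈ J) :
    IsSubstStable K (insert 0 I) j := by
  rintro d (rfl | hd) n hn1 hnd hc
  · omega
  · exact Set.mem_insert_of_mem _ (hIJ.stable_I d hd n hn1 hnd hc j hj)

lemma insert_zero_add_subset (hIJ : AdmissibleConditions K I J) :
    insert 0 I + insert 0 I ⊆ insert 0 I := by
  rintro _ ⟨a, ha, b, hb, rfl⟩
  rcases ha with rfl | ha
  · simpa using hb
  rcases hb with rfl | hb
  · simpa using Set.mem_insert_of_mem 0 ha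
  exact Set.mem_insert_of_mem _ (hIJ.add_mem_I a ha b hb)

end AdmissibleConditions

namespace RiordanElem

def IsSupported (I J : Set ℕ) (a : RiordanElem K) : Prop :=
  SupportedIn (insert 0 I) a.h ∧ SupportedIn (insert 1 ((· + 1) '' J)) a.g

variable {I J : Set ℕ}

lemma isSupported_one : IsSupported I J (1 : RiordanElem K) :=
  ⟨by simpa using supportedIn_X_pow (K := K) (Set.mem_insert 0 I),
    by simpa using supportedIn_X_pow (K := K) (Set.mem_insert 1 ((· + 1) '' J))⟩

lemma IsSupported.mul (hIJ : AdmissibleConditions K I J) {a b : RiordanElem K}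
    (ha : IsSupported I J a) (hb : IsSupported I J b) : IsSupported I J (a * b) := by
  have hJ := fun j (hj : j ∈ J) => hIJ.isSubstStable_insert_one hj
  have hI := fun j (hj : j ∈ J) => hIJ.isSubstStable_insert_zero hj
  exact ⟨(ha.1.mul (hb.1.comp hI hJ a.g_zero a.g_one ha.2)).mono hIJ.insert_zero_add_subset,
    hb.2.comp hJ hJ a.g_zero a.g_one ha.2⟩

lemma IsSupported.pow (hIJ : AdmissibleConditions K I J) {a : RiordanElem K}
    (ha : IsSupported I J a) (n : ℕ) : IsSupported I J (a ^ n) := by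
  induction n with
  | zero => exact isSupported_one
  | succ n ih => rw [pow_succ]; exact ih.mul hIJ ha

end RiordanElem

variable (K) in
def supportedUnits (I J : Set ℕ) : Set (RiordanGroup K) :=
  {u | (u : RiordanElem K).IsSupported I J}

-- Chosen so that `coeff n (comp (compLeftInv g) g) = if n = 1 then 1 else 0`, given
-- `coeff n (g ^ n) = 1`.
noncomputable def compLeftInvCoeff (g : K⟦X⟧) (n : ℕ) : K :=
  (if n = 1 then 1 else 0) - ∑ d : Fin n, compLeftInvCoeff g d * coeff n (g ^ (d : ℕ))

noncomputable def compLeftInv (g : K⟦X⟧) : K⟦X⟧ := mk (compLeftInvCoeff g)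

lemma coeff_compLeftInv (g : K⟦X⟧) (n : ℕ) :
    coeff n (compLeftInv g) =
      (if n = 1 then 1 else 0) - ∑ d ∈ range n, coeff d (compLeftInv g) * coeff n (g ^ d) := by
  rw [compLeftInv, coeff_mk, compLeftInvCoeff,
    Fin.sum_univ_eq_sum_range (fun d => compLeftInvCoeff g d * coeff n (g ^ d))]
  simp only [coeff_mk]

lemma constantCoeff_compLeftInv (g : K⟦X⟧) : constantCoeff (compLeftInv g) = 0 := by
  rw [← coeff_zero_eq_constantCoeff_apply, coeff_compLeftInv]
  simp

lemma coeff_one_compLeftInv (g : K⟦X⟧) : coeff 1 (compLeftInv g) = 1 := by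
  rw [coeff_compLeftInv, sum_range_one, coeff_zero_eq_constantCoeff_apply,
    constantCoeff_compLeftInv]
  simp

lemma compLeftInv_comp {g : K⟦X⟧} (hg0 : constantCoeff g = 0) (hg1 : coeff 1 g = 1) :
    comp (compLeftInv g) g = X := by
  ext n
  rw [coeff_comp, sum_range_succ, coeff_pow_self hg0, hg1, one_pow, mul_one,
    coeff_compLeftInv, coeff_X]
  ring

lemma isUnit_of_forall_exists_mul_eq_one {M : Type*} [Monoid M] (h : ∀ a : M, ∃ b, a * b = 1)
    (a : M) : IsUnit a := by
  obtain ⟨b, hab⟩ := h a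
  obtain ⟨c, hbc⟩ := h b
  obtain rfl : a = c := left_inv_eq_right_inv hab hbc
  exact ⟨⟨a, b, hab, hbc⟩, rfl⟩

namespace RiordanElem

lemma exists_mul_eq_one (a : RiordanElem K) : ∃ b, a * b = 1 := by
  have hL0 := constantCoeff_compLeftInv a.g
  have hL := compLeftInv_comp a.g_zero a.g_one
  refine ⟨⟨comp (invOfUnit a.h 1) (compLeftInv a.g), compLeftInv a.g, ?_, hL0,
    coeff_one_compLeftInv a.g⟩, RiordanElem.ext ?_ hL⟩
  · simp [constantCoeff_comp, constantCoeff_invOfUnit]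
  · rw [mul_h, comp_assoc hL0 a.g_zero, hL, comp_X, mul_invOfUnit _ _ (by simp [a.h_zero]), one_h]

lemma isUnit (a : RiordanElem K) : IsUnit a :=
  isUnit_of_forall_exists_mul_eq_one exists_mul_eq_one a

end RiordanElem

lemma exists_pow_eq_inv_of_finite {G α : Type*} [Group G] [Finite α] (F : G → α)
    (hF : ∀ a b c : G, F a = F b → F (c * a) = F (c * b)) (u : G) :
    ∃ t : ℕ, F u⁻¹ = F (u ^ t) := by
  obtain ⟨s, t, hst, h⟩ := Set.finite_univ.exists_lt_map_eq_of_forall_mem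
    (f := fun n : ℕ => F (u ^ n)) fun _ => Set.mem_univ _
  obtain ⟨r, rfl⟩ : ∃ r, t = s + 1 + r := ⟨t - s - 1, by omega⟩
  refine ⟨r, ?_⟩
  simpa [pow_add, pow_succ, mul_assoc] using hF _ _ (u ^ (s + 1))⁻¹ h

namespace RiordanElem

lemma trunc_mul_left_congr {N : ℕ} {a b : RiordanElem K} (hh : trunc N a.h = trunc N b.h)
    (hg : trunc N a.g = trunc N b.g) (c : RiordanElem K) :
    trunc N (c * a).h = trunc N (c * b).h ∧ trunc N (c * a).g = trunc N (c * b).g := by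
  refine ⟨?_, trunc_comp_congr hg rfl⟩
  rw [mul_h, mul_h, ← trunc_trunc_mul_trunc, trunc_comp_congr hh rfl, trunc_trunc_mul_trunc]

end RiordanElem

lemma RiordanGroup.exists_pow_trunc_eq_inv [Finite K] (u : RiordanGroup K) (N : ℕ) :
    ∃ t : ℕ, trunc N (↑u⁻¹ : RiordanElem K).h = trunc N (↑u ^ t : RiordanElem K).h ∧
      trunc N (↑u⁻¹ : RiordanElem K).g = trunc N (↑u ^ t : RiordanElem K).g := by
  let F (v : RiordanGroup K) : (Fin N → K) × (Fin N → K) :=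
    (fun k => coeff k (v : RiordanElem K).h, fun k => coeff k (v : RiordanElem K).g)
  have hF (a b : RiordanGroup K) : F a = F b ↔
      trunc N (a : RiordanElem K).h = trunc N (b : RiordanElem K).h ∧
        trunc N (a : RiordanElem K).g = trunc N (b : RiordanElem K).g := by
    simp [F, funext_iff, Fin.forall_iff, trunc_eq_trunc_iff]
  have hFmul (a b c : RiordanGroup K) (h : F a = F b) : F (c * a) = F (c * b) := by
    obtain ⟨hh, hg⟩ := (hF a b).mp h
    simpa [hF] using RiordanElem.trunc_mul_left_congr hh hg c
  obtain ⟨t, ht⟩ := exists_pow_eq_inv_of_finite F hFmul u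
  exact ⟨t, by simpa [hF] using ht⟩

lemma exists_subgroup_of_admissibleConditions [Finite K] {I J : Set ℕ}
    (hIJ : AdmissibleConditions K I J) :
    ∃ S : Subgroup (RiordanGroup K),
      (S : Set (RiordanGroup K)) = supportedUnits K I J := by
  refine ⟨{ carrier := supportedUnits K I J
            mul_mem' := fun ha hb => ha.mul hIJ hb
            one_mem' := RiordanElem.isSupported_one
            inv_mem' := fun {u} hu => ⟨fun m hm => ?_, fun m hm => ?_⟩ }, rfl⟩
  all_goals
    obtain ⟨t, hh, hg⟩ := RiordanGroup.exists_pow_trunc_eq_inv u (m + 1)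
  · rw [coeff_eq_of_trunc_eq hh m.lt_succ_self]
    exact (hu.pow hIJ t).1 m hm
  · rw [coeff_eq_of_trunc_eq hg m.lt_succ_self]
    exact (hu.pow hIJ t).2 m hm

namespace RiordanElem

noncomputable def ofOneAddXPow {i : ℕ} (hi : 0 < i) : RiordanElem K :=
  ⟨1 + X ^ i, X, by simp [hi.ne'], constantCoeff_X, coeff_one_X⟩

noncomputable def ofElementary {j : ℕ} (hj : 0 < j) : RiordanElem K :=
  ⟨1, elementary 1 j, map_one _, constantCoeff_elementary 1 j,
    by simp [coeff_elementary, hj.ne']⟩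

variable {I J : Set ℕ}

lemma isSupported_ofOneAddXPow {i : ℕ} (hi : i ∈ I) (hi0 : 0 < i) :
    IsSupported I J (ofOneAddXPow hi0 : RiordanElem K) := by
  refine ⟨fun n hn => ?_, (isSupported_one (I := I) (J := J)).2⟩
  simp only [Set.mem_insert_iff, not_or] at hn
  simp [ofOneAddXPow, coeff_one, coeff_X_pow, hn.1, ne_of_mem_of_not_mem hi hn.2 |>.symm]

lemma isSupported_ofElementary {j : ℕ} (hj : j ∈ J) (hj0 : 0 < j) :
    IsSupported I J (ofElementary hj0 : RiordanElem K) := by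
  refine ⟨(isSupported_one (I := I) (J := J)).1, fun n hn => ?_⟩
  simp only [Set.mem_insert_iff, Set.mem_image, not_or, not_exists, not_and] at hn
  have : n ≠ j + 1 := fun h => hn.2 j hj h.symm
  simp [ofElementary, coeff_elementary, hn.1, this]

lemma coeff_ofElementary_mul_ofElementary_g {j j' n : ℕ} (hj : 0 < j) (hj' : 0 < j')
    (hn : 1 ≤ n) :
    coeff (j + n * j' + 1) (ofElementary hj' * ofElementary hj : RiordanElem K).g =
      ((j + 1).choose n : K) := by
  have : j' ≤ n * j' := Nat.le_mul_of_pos_left j' hn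
  change coeff _ (comp (elementary 1 j) (elementary 1 j')) = _
  rw [elementary, map_one, one_mul, add_comp,
    X_comp (constantCoeff_elementary _ _), X_pow_comp (constantCoeff_elementary _ _), map_add,
    coeff_elementary, if_neg (by omega), if_neg (by omega),
    show j + n * j' + 1 = j + 1 + n * j' by ring, coeff_elementary_pow_add_mul hj']
  simp

lemma coeff_ofOneAddXPow_mul_ofOneAddXPow_h {i i' : ℕ} (hi : 0 < i) (hi' : 0 < i') :
    coeff (i + i') (ofOneAddXPow hi * ofOneAddXPow hi' : RiordanElem K).h = 1 := by
  change coeff _ ((1 + X ^ i) * comp (1 + X ^ i') X) = _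
  rw [comp_X]
  simp [add_mul, mul_add, ← pow_add, coeff_X_pow, coeff_one, hi.ne', hi'.ne']

lemma coeff_ofElementary_mul_ofOneAddXPow_h {i j n : ℕ} (hi : 0 < i) (hj : 0 < j) :
    coeff (i + n * j) (ofElementary hj * ofOneAddXPow hi : RiordanElem K).h = (i.choose n : K) := by
  change coeff _ (1 * comp (1 + X ^ i) (elementary 1 j)) = _
  rw [one_mul, add_comp, one_comp,
    X_pow_comp (constantCoeff_elementary _ _), map_add, coeff_elementary_pow_add_mul hj]
  simp [coeff_one, hi.ne']

lemma IsSupported.mul_of_subgroup {S : Subgroup (RiordanGroup K)}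
    (hS : (S : Set (RiordanGroup K)) = supportedUnits K I J)
    {a b : RiordanElem K} (ha : IsSupported I J a) (hb : IsSupported I J b) :
    IsSupported I J (a * b) := by
  have hmem {c : RiordanElem K} (hc : IsSupported I J c) : c.isUnit.unit ∈ S := by
    rw [← SetLike.mem_coe, hS]
    simpa [supportedUnits] using hc
  have hab := S.mul_mem (hmem ha) (hmem hb)
  rw [← SetLike.mem_coe, hS] at hab
  simpa [supportedUnits] using hab

end RiordanElem

open RiordanElem in
lemma admissibleConditions_of_subgroup [Nontrivial K] {I J : Set ℕ} (hI : 0 ∉ I) (hJ : 0 ∉ J)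
    {S : Subgroup (RiordanGroup K)}
    (hS : (S : Set (RiordanGroup K)) = supportedUnits K I J) :
    AdmissibleConditions K I J where
  stable_J j hj n hn1 _ hc j' hj' := by
    have hj0 := Nat.pos_of_ne_zero (ne_of_mem_of_not_mem hj hJ)
    have hj'0 := Nat.pos_of_ne_zero (ne_of_mem_of_not_mem hj' hJ)
    have h := ((isSupported_ofElementary (K := K) (I := I) hj' hj'0).mul_of_subgroup hS
      (isSupported_ofElementary hj hj0)).2 (j + n * j' + 1)
    rw [coeff_ofElementary_mul_ofElementary_g hj0 hj'0 hn1] at h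
    by_contra hmem
    exact hc (h (by simpa [hj0.ne'] using hmem))
  add_mem_I i hi i' hi' := by
    have hi0 := Nat.pos_of_ne_zero (ne_of_mem_of_not_mem hi hI)
    have hi'0 := Nat.pos_of_ne_zero (ne_of_mem_of_not_mem hi' hI)
    have h := ((isSupported_ofOneAddXPow (K := K) (J := J) hi hi0).mul_of_subgroup hS
      (isSupported_ofOneAddXPow hi' hi'0)).1 (i + i')
    rw [coeff_ofOneAddXPow_mul_ofOneAddXPow_h hi0 hi'0] at h
    by_contra hmem
    exact one_ne_zero (h (by simpa [hi0.ne'] using hmem))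
  stable_I i hi n hn1 hni hc j hj := by
    have hi0 : 0 < i := by omega
    have hj0 := Nat.pos_of_ne_zero (ne_of_mem_of_not_mem hj hJ)
    have h := ((isSupported_ofElementary (K := K) (I := I) hj hj0).mul_of_subgroup hS
      (isSupported_ofOneAddXPow hi hi0)).1 (i + n * j)
    rw [coeff_ofElementary_mul_ofOneAddXPow_h hi0 hj0] at h
    by_contra hmem
    exact hc (h (by simpa [hi0.ne'] using hmem))

theorem exists_subgroup_iff_admissibleConditions [Finite K] [Nontrivial K] {I J : Set ℕ}
    (hI : 0 ∉ I) (hJ : 0 ∉ J) :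
    (∃ S : Subgroup (RiordanGroup K),
      (S : Set (RiordanGroup K)) = supportedUnits K I J) ↔
      AdmissibleConditions K I J :=
  ⟨fun ⟨_, hS⟩ => admissibleConditions_of_subgroup hI hJ hS,
    exists_subgroup_of_admissibleConditions⟩

lemma supportedIn_insert_zero_iff {I : Set ℕ} {f : K⟦X⟧} :
    SupportedIn (insert 0 I) f ↔ ∀ i, 0 < i → i ∉ I → coeff i f = 0 := by
  simp only [SupportedIn, Set.mem_insert_iff, not_or, Nat.pos_iff_ne_zero, and_imp]

lemma supportedIn_insert_one_image_iff {J : Set ℕ} {f : K⟦X⟧} (hf : constantCoeff f = 0) :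
    SupportedIn (insert 1 ((· + 1) '' J)) f ↔
      ∀ j, 0 < j → j ∉ J → coeff (j + 1) f = 0 := by
  refine ⟨fun h j hj hjJ => h _ (by simp [hj.ne', hjJ]), fun h n hn => ?_⟩
  simp only [Set.mem_insert_iff, Set.mem_image, not_or, not_exists, not_and] at hn
  match n, hn with
  | 0, _ => rwa [coeff_zero_eq_constantCoeff_apply]
  | j + 1, ⟨hj, hjJ⟩ => exact h j (by omega) fun hj' => hjJ j hj' rfl

lemma RIJ_eq (p : ℕ) (I J : Set ℕ) :
    RIJ p I J = supportedUnits (ZMod p) I J := by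
  ext u
  rw [RIJ, supportedUnits, Set.mem_ofPred_eq, Set.mem_ofPred_eq, RiordanElem.IsSupported,
    supportedIn_insert_zero_iff,
    supportedIn_insert_one_image_iff (u : RiordanElem (ZMod p)).g_zero]

/-- `(I, J)` is an admissible index-pair if and only if the three
binomial/additivity conditions of Lemma (admissible pair) hold. -/
theorem admissible_pair_iff (p : ℕ) (hp : p.Prime) (I J : Set ℕ)
    (hI : 0 ∉ I) (hJ : 0 ∉ J) :
    IsAdmissible p I J ↔
      ((∀ j ∈ J, ∀ n : ℕ, 1 ≤ n → n ≤ j + 1 → ¬ (p ∣ Nat.choose (j + 1) n) →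
          ∀ j' ∈ J, j + n * j' ∈ J) ∧
       (∀ i ∈ I, ∀ i' ∈ I, i + i' ∈ I) ∧
       (∀ i ∈ I, ∀ n : ℕ, 1 ≤ n → n ≤ i → ¬ (p ∣ Nat.choose i n) →
          ∀ j ∈ J, i + n * j ∈ I)) := by
  have := Fact.mk hp
  rw [IsAdmissible, RIJ_eq, exists_subgroup_iff_admissibleConditions hI hJ]
  simp only [← ZMod.natCast_eq_zero_iff, ← ne_eq]
  exact ⟨fun h => ⟨h.1, h.2, h.3⟩, fun h => ⟨h.1, h.2.1, h.2.2⟩⟩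

end RiordanPaper
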